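/- The contingency metamatrix admits the decomposition 𝔐(n) = (1/n!) S_*(n) · diag((1!)^2 c(n,1), ..., (n!)^2 c(n,n)) · S_*(n)^T, where S_*(n)_{pk} = p!·S(k,p)/k!. Equivalently, entrywise: n!·m_{pq}(n) = Σ_{k=1}^n c(n,k)·p!S(k,p)·q!S(k,q). -/

import Mathlib

def IsCM {p q : ℕ} (M : Matrix (Fin p) (Fin q) ℕ) : Prop :=
  (∀ i, ∃ j, M i j ≠ 0) ∧ (∀ j, ∃ i, M i j ≠ 0)

noncomputable def cmCount (p q n : ℕ) : ℕ :=
  Nat.card {M : Matrix (Fin p) (Fin q) ℕ // IsCM M ∧ ∑ i, ∑ j, M i j = n}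

noncomputable def stirlingFst (n k : ℕ) : ℕ :=
  (∏ i ∈ Finset.range n, (Polynomial.X + Polynomial.C (i : ℕ))).coeff k

def stirling2 : ℕ → ℕ → ℕ
  | 0, 0 => 1
  | 0, _ + 1 => 0
  | _ + 1, 0 => 0
  | k + 1, p + 1 => (p + 1) * stirling2 k (p + 1) + stirling2 k p

open Finset Polynomial

lemma stirling2_zero_of_lt : ∀ {k p : ℕ}, k < p → stirling2 k p = 0
  | 0, _ + 1, _ => rfl
  | k + 1, p + 1, h => by
    rw [stirling2, stirling2_zero_of_lt (by omega), stirling2_zero_of_lt (by omega)]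
    ring

lemma ascFactorial_prod (x n : ℕ) : x.ascFactorial n = ∏ i ∈ range n, (x + i) := by
  induction n with
  | zero => simp [Nat.ascFactorial_zero]
  | succ n ih => rw [Nat.ascFactorial_succ, prod_range_succ, ih, mul_comm]

lemma ascFactorial_eq_sum (n x : ℕ) :
    x.ascFactorial n = ∑ k ∈ range (n + 1), stirlingFst n k * x ^ k := by
  have hP : (∏ i ∈ range n, (X + C (i : ℕ))).natDegree = n := by
    rw [Polynomial.natDegree_prod _ _ (fun i _ => by
      exact fun h => by simpa using congrArg (fun p => p.coeff 1) h)]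
    rw [Finset.sum_congr rfl (fun i _ => Polynomial.natDegree_X_add_C _)]
    simp
  have h2 := Polynomial.eval_eq_sum_range (p := ∏ i ∈ range n, (X + C (i : ℕ))) x
  rw [hP] at h2
  rw [ascFactorial_prod]
  calc ∏ i ∈ range n, (x + i) = eval x (∏ i ∈ range n, (X + C (i : ℕ))) := by
        simp [Polynomial.eval_prod]
    _ = _ := by rw [h2]; rfl

lemma mul_choose_split (x i : ℕ) :
    x * x.choose i = i * x.choose i + (i + 1) * x.choose (i + 1) := by
  rcases le_or_gt i x with h | h
  · have h1 := Nat.choose_succ_right_eq x i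
    have h2 : x = i + (x - i) := by omega
    calc x * x.choose i = (i + (x - i)) * x.choose i := by rw [← h2]
      _ = i * x.choose i + x.choose i * (x - i) := by ring
      _ = i * x.choose i + (i + 1) * x.choose (i + 1) := by rw [← h1]; ring
  · rw [Nat.choose_eq_zero_of_lt h, Nat.choose_eq_zero_of_lt (by omega)]; ring

lemma pow_eq_sum_choose (k x : ℕ) :
    x ^ k = ∑ i ∈ range (k + 1), x.choose i * (Nat.factorial i * stirling2 k i) := by
  induction k with
  | zero => simp [stirling2]
  | succ k ih =>
    have key : ∀ i, x * (x.choose i * (Nat.factorial i * stirling2 k i))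
        = x.choose i * (i * Nat.factorial i * stirling2 k i)
          + x.choose (i + 1) * ((i + 1) * Nat.factorial i * stirling2 k i) := by
      intro i
      have h := mul_choose_split x i
      calc x * (x.choose i * (Nat.factorial i * stirling2 k i))
          = (x * x.choose i) * (Nat.factorial i * stirling2 k i) := by ring
        _ = (i * x.choose i + (i + 1) * x.choose (i + 1)) * (Nat.factorial i * stirling2 k i) := by
            rw [h]
        _ = _ := by ring
    calc x ^ (k + 1) = x * x ^ k := by ring
      _ = ∑ i ∈ range (k + 1), x * (x.choose i * (Nat.factorial i * stirling2 k i)) := by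
          rw [ih, Finset.mul_sum]
      _ = ∑ i ∈ range (k + 1), x.choose i * (i * Nat.factorial i * stirling2 k i)
          + ∑ i ∈ range (k + 1), x.choose (i + 1) * ((i + 1) * Nat.factorial i * stirling2 k i) := by
          rw [← Finset.sum_add_distrib]; exact Finset.sum_congr rfl fun i _ => key i
      _ = ∑ i ∈ range (k + 2), x.choose i * (Nat.factorial i * stirling2 (k + 1) i) := by
          rw [Finset.sum_range_succ' (fun i => x.choose i * (Nat.factorial i * stirling2 (k+1) i)) (k+1)]
          have h0 : x.choose 0 * (Nat.factorial 0 * stirling2 (k + 1) 0) = 0 := by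
            simp [stirling2]
          rw [h0, add_zero]
          have hrec : ∀ i, x.choose (i+1) * (Nat.factorial (i+1) * stirling2 (k + 1) (i+1))
              = x.choose (i+1) * ((i+1) * Nat.factorial (i+1) * stirling2 k (i+1))
                + x.choose (i+1) * ((i+1) * Nat.factorial i * stirling2 k i) := by
            intro i
            rw [show stirling2 (k+1) (i+1) = (i + 1) * stirling2 k (i + 1) + stirling2 k i from rfl]
            rw [Nat.factorial_succ]
            ring
          rw [Finset.sum_congr rfl fun i _ => hrec i, Finset.sum_add_distrib]
          congr 1
          rw [Finset.sum_range_succ' (fun i => x.choose i * (i * Nat.factorial i * stirling2 k i)) k]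
          rw [Finset.sum_range_succ (fun i => x.choose (i+1) * ((i+1) * Nat.factorial (i+1) * stirling2 k (i+1))) k]
          rw [stirling2_zero_of_lt (show k < k + 1 by omega)]
          simp [Nat.factorial_succ]

lemma card_funSum (α : Type) [Fintype α] [DecidableEq α] (n : ℕ) :
    Nat.card {f : α → ℕ // ∑ a, f a = n} = Nat.multichoose (Fintype.card α) n := by
  rw [← Nat.card_congr (Sym.equivNatSumOfFintype α n), Nat.card_eq_fintype_card,
    Sym.card_sym_eq_multichoose]

-- stars and bars for matrices
lemma card_matSum (p q n : ℕ) :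
    Nat.card {M : Matrix (Fin p) (Fin q) ℕ // ∑ i, ∑ j, M i j = n}
      = Nat.multichoose (p * q) n := by
  have e : {M : Matrix (Fin p) (Fin q) ℕ // ∑ i, ∑ j, M i j = n}
      ≃ {f : Fin p × Fin q → ℕ // ∑ a, f a = n} := by
    refine (Equiv.curry (Fin p) (Fin q) ℕ).symm.subtypeEquiv fun M => ?_
    rw [Fintype.sum_prod_type]
    rfl
  rw [Nat.card_congr e, card_funSum]
  simp

open Classical in
noncomputable def rowSupp {p q : ℕ} (M : Matrix (Fin p) (Fin q) ℕ) : Finset (Fin p) :=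
  univ.filter (fun i => ∃ j, M i j ≠ 0)

open Classical in
noncomputable def colSupp {p q : ℕ} (M : Matrix (Fin p) (Fin q) ℕ) : Finset (Fin q) :=
  univ.filter (fun j => ∃ i, M i j ≠ 0)

lemma row_zero {p q : ℕ} {M : Matrix (Fin p) (Fin q) ℕ} {i : Fin p}
    (h : i ∉ rowSupp M) (j : Fin q) : M i j = 0 := by
  by_contra hc
  exact h (by simp [rowSupp]; exact ⟨j, hc⟩)

lemma col_zero {p q : ℕ} {M : Matrix (Fin p) (Fin q) ℕ} {j : Fin q}
    (h : j ∉ colSupp M) (i : Fin p) : M i j = 0 := by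
  by_contra hc
  exact h (by simp [colSupp]; exact ⟨i, hc⟩)

-- reindexing sums: if M vanishes off A × B then its total sum equals the sum over
-- Fin A.card × Fin B.card via the chosen equivs
lemma sum_reindex {p q : ℕ} (A : Finset (Fin p)) (B : Finset (Fin q))
    (M : Matrix (Fin p) (Fin q) ℕ)
    (hA : ∀ i ∉ A, ∀ j, M i j = 0) (hB : ∀ j ∉ B, ∀ i, M i j = 0) :
    ∑ i, ∑ j, M i j = ∑ r : Fin A.card, ∑ s : Fin B.card,
      M (A.equivFin.symm r) (B.equivFin.symm s) := by
  have h1 : ∑ i, ∑ j, M i j = ∑ i ∈ A, ∑ j ∈ B, M i j := by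
    rw [← Finset.sum_subset (Finset.subset_univ A) (fun i _ hi => by
      simp [hA i hi])]
    exact Finset.sum_congr rfl fun i _ =>
      (Finset.sum_subset (Finset.subset_univ B) (fun j _ hj => hB j hj i)).symm
  rw [h1]
  rw [← Finset.sum_coe_sort A (fun i => ∑ j ∈ B, M i j)]
  rw [← Equiv.sum_comp A.equivFin.symm (fun x : {x // x ∈ A} => ∑ j ∈ B, M x j)]
  refine Finset.sum_congr rfl fun r _ => ?_
  rw [← Finset.sum_coe_sort B (fun j => M _ j)]
  rw [← Equiv.sum_comp B.equivFin.symm (fun y : {y // y ∈ B} => M _ y)]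

lemma fiber_card (p q n : ℕ) (A : Finset (Fin p)) (B : Finset (Fin q)) :
    Nat.card {M : Matrix (Fin p) (Fin q) ℕ //
        (rowSupp M = A ∧ colSupp M = B) ∧ ∑ i, ∑ j, M i j = n}
      = cmCount A.card B.card n := by
  rw [cmCount]
  refine (Nat.card_congr ?_).symm
  set eA := A.equivFin
  set eB := B.equivFin
  refine ⟨fun N => ⟨fun i j => if h : i ∈ A then if h' : j ∈ B then
      N.1 (eA ⟨i, h⟩) (eB ⟨j, h'⟩) else 0 else 0, ⟨?_, ?_⟩, ?_⟩,
    fun M => ⟨fun r s => M.1 (eA.symm r) (eB.symm s), ⟨?_, ?_⟩, ?_⟩, ?_, ?_⟩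
  · -- rowSupp = A
    ext i
    simp only [rowSupp, Finset.mem_filter, Finset.mem_univ, true_and]
    constructor
    · rintro ⟨j, hj⟩
      by_contra hi
      simp [dif_neg hi] at hj
    · intro hi
      obtain ⟨s, hs⟩ := N.2.1.1 (eA ⟨i, hi⟩)
      refine ⟨(eB.symm s : Fin q), ?_⟩
      rw [dif_pos hi, dif_pos (eB.symm s).2]
      simpa [Subtype.coe_eta, Equiv.apply_symm_apply] using hs
  · -- colSupp = B
    ext j
    simp only [colSupp, Finset.mem_filter, Finset.mem_univ, true_and]
    constructor
    · rintro ⟨i, hi⟩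
      by_contra hj
      by_cases hiA : i ∈ A
      · simp [dif_pos hiA, dif_neg hj] at hi
      · simp [dif_neg hiA] at hi
    · intro hj
      obtain ⟨r, hr⟩ := N.2.1.2 (eB ⟨j, hj⟩)
      refine ⟨(eA.symm r : Fin p), ?_⟩
      rw [dif_pos (eA.symm r).2, dif_pos hj]
      simpa [Subtype.coe_eta, Equiv.apply_symm_apply] using hr
  · -- sum = n
    beta_reduce
    rw [sum_reindex A B (fun i j => if h : i ∈ A then if h' : j ∈ B then
        N.1 (eA ⟨i, h⟩) (eB ⟨j, h'⟩) else 0 else 0 : Matrix (Fin p) (Fin q) ℕ) (fun i hi j => by simp [dif_neg hi])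
      (fun j hj i => by by_cases hiA : i ∈ A <;> simp [hiA, dif_neg hj])]
    have heq : ∀ r s, (if h : ((eA.symm r : Fin p)) ∈ A then
        if h' : ((eB.symm s : Fin q)) ∈ B then
          N.1 (eA ⟨_, h⟩) (eB ⟨_, h'⟩) else 0 else 0) = N.1 r s := by
      intro r s
      rw [dif_pos (eA.symm r).2, dif_pos (eB.symm s).2]
      simp [Subtype.coe_eta, Equiv.apply_symm_apply]
    rw [Finset.sum_congr rfl fun r _ => Finset.sum_congr rfl fun s _ => heq r s]
    exact N.2.2
  · -- rows of inverse are nonzero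
    intro r
    have hmem : (eA.symm r : Fin p) ∈ rowSupp M.1 := by rw [M.2.1.1]; exact (eA.symm r).2
    simp only [rowSupp, Finset.mem_filter, Finset.mem_univ, true_and] at hmem
    obtain ⟨j, hj⟩ := hmem
    have hjB : j ∈ B := by
      rw [← M.2.1.2]
      simp only [colSupp, Finset.mem_filter, Finset.mem_univ, true_and]
      exact ⟨_, hj⟩
    refine ⟨eB ⟨j, hjB⟩, ?_⟩
    simpa [Equiv.symm_apply_apply] using hj
  · -- cols of inverse are nonzero
    intro s
    have hmem : (eB.symm s : Fin q) ∈ colSupp M.1 := by rw [M.2.1.2]; exact (eB.symm s).2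
    simp only [colSupp, Finset.mem_filter, Finset.mem_univ, true_and] at hmem
    obtain ⟨i, hi⟩ := hmem
    have hiA : i ∈ A := by
      rw [← M.2.1.1]
      simp only [rowSupp, Finset.mem_filter, Finset.mem_univ, true_and]
      exact ⟨_, hi⟩
    refine ⟨eA ⟨i, hiA⟩, ?_⟩
    simpa [Equiv.symm_apply_apply] using hi
  · -- sum of inverse
    have := M.2.2
    rw [sum_reindex A B M.1 (fun i hi j => row_zero (by rw [M.2.1.1]; exact hi) j)
      (fun j hj i => col_zero (by rw [M.2.1.2]; exact hj) i)] at this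
    exact this
  · -- left inverse
    intro N
    apply Subtype.ext
    funext r s
    show (if h : ((eA.symm r : Fin p)) ∈ A then if h' : ((eB.symm s : Fin q)) ∈ B then
      N.1 (eA ⟨_, h⟩) (eB ⟨_, h'⟩) else 0 else 0) = N.1 r s
    rw [dif_pos (eA.symm r).2, dif_pos (eB.symm s).2]
    simp [Subtype.coe_eta, Equiv.apply_symm_apply]
  · -- right inverse
    intro M
    apply Subtype.ext
    funext i j
    by_cases hi : i ∈ A
    · by_cases hj : j ∈ B
      · show (if h : i ∈ A then if h' : j ∈ B then
          M.1 (eA.symm (eA ⟨i, h⟩)) (eB.symm (eB ⟨j, h'⟩)) else 0 else 0) = M.1 i j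
        rw [dif_pos hi, dif_pos hj]
        simp [Equiv.symm_apply_apply]
      · show (if h : i ∈ A then if h' : j ∈ B then
          M.1 (eA.symm (eA ⟨i, h⟩)) (eB.symm (eB ⟨j, h'⟩)) else 0 else 0) = M.1 i j
        rw [dif_pos hi, dif_neg hj]
        exact (col_zero (M := M.1) (by rw [M.2.1.2]; exact hj) i).symm
    · show (if h : i ∈ A then if h' : j ∈ B then
        M.1 (eA.symm (eA ⟨i, h⟩)) (eB.symm (eB ⟨j, h'⟩)) else 0 else 0) = M.1 i j
      rw [dif_neg hi]
      exact (row_zero (M := M.1) (by rw [M.2.1.1]; exact hi) j).symm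

lemma finite_matSum (p q n : ℕ) :
    Finite {M : Matrix (Fin p) (Fin q) ℕ // ∑ i, ∑ j, M i j = n} := by
  refine Finite.of_injective (fun M => (fun i j => (⟨M.1 i j, ?_⟩ : Fin (n + 1)) :
      Fin p → Fin q → Fin (n + 1))) ?_
  · have h1 : M.1 i j ≤ ∑ j', M.1 i j' :=
      Finset.single_le_sum (f := fun j' => M.1 i j') (fun _ _ => Nat.zero_le _) (mem_univ j)
    have h2 : (∑ j', M.1 i j') ≤ ∑ i', ∑ j', M.1 i' j' :=
      Finset.single_le_sum (f := fun i' => ∑ j', M.1 i' j') (fun _ _ => Nat.zero_le _) (mem_univ i)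
    have h3 := M.2
    omega
  · intro M N h
    apply Subtype.ext
    funext i j
    have := congrFun (congrFun h i) j
    simpa [Fin.ext_iff] using this

-- grouping a sum over all finsets by cardinality
lemma sum_finset_card (p : ℕ) (g : ℕ → ℕ) :
    ∑ A : Finset (Fin p), g A.card = ∑ i ∈ range (p + 1), p.choose i * g i := by
  have h1 : ∑ A : Finset (Fin p), g A.card = ∑ A ∈ (univ : Finset (Fin p)).powerset, g A.card := by
    rw [Finset.powerset_univ]
  rw [h1, Finset.sum_powerset]
  rw [Finset.card_univ, Fintype.card_fin]
  refine Finset.sum_congr rfl fun j hj => ?_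
  rw [Finset.sum_congr rfl (fun A hA => by
    rw [(Finset.mem_powersetCard.mp hA).2]), Finset.sum_const, Finset.card_powersetCard,
    Finset.card_univ, Fintype.card_fin, smul_eq_mul]

lemma matSum_decomp (p q n : ℕ) :
    Nat.multichoose (p * q) n
      = ∑ i ∈ range (p + 1), ∑ j ∈ range (q + 1),
          p.choose i * (q.choose j * cmCount i j n) := by
  rw [← card_matSum p q n]
  haveI := finite_matSum p q n
  haveI : Fintype {M : Matrix (Fin p) (Fin q) ℕ // ∑ i, ∑ j, M i j = n} := Fintype.ofFinite _
  set T := {M : Matrix (Fin p) (Fin q) ℕ // ∑ i, ∑ j, M i j = n} with hT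
  let f : T → Finset (Fin p) × Finset (Fin q) := fun M => (rowSupp M.1, colSupp M.1)
  classical
  rw [Nat.card_congr (Equiv.sigmaFiberEquiv f).symm, Nat.card_eq_fintype_card,
    Fintype.card_sigma]
  have hfib : ∀ AB : Finset (Fin p) × Finset (Fin q),
      Fintype.card {M : T // f M = AB} = cmCount AB.1.card AB.2.card n := by
    intro AB
    rw [← Nat.card_eq_fintype_card, ← fiber_card p q n AB.1 AB.2]
    apply Nat.card_congr
    refine ⟨fun M => ⟨M.1.1, ⟨congrArg Prod.fst M.2, congrArg Prod.snd M.2⟩, M.1.2⟩,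
      fun M => ⟨⟨M.1, M.2.2⟩, Prod.ext M.2.1.1 M.2.1.2⟩, fun M => rfl, fun M => rfl⟩
  rw [Finset.sum_congr rfl fun AB _ => hfib AB, Fintype.sum_prod_type]
  rw [sum_finset_card p (fun i => ∑ B : Finset (Fin q), cmCount i B.card n)]
  refine Finset.sum_congr rfl fun i _ => ?_
  rw [sum_finset_card q (fun j => cmCount i j n), Finset.mul_sum]

lemma double_inversion (f g : ℕ → ℕ → ℕ)
    (h : ∀ p q, ∑ i ∈ range (p+1), ∑ j ∈ range (q+1), p.choose i * (q.choose j * f i j)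
        = ∑ i ∈ range (p+1), ∑ j ∈ range (q+1), p.choose i * (q.choose j * g i j)) :
    ∀ p q, f p q = g p q := by
  intro p
  induction p using Nat.strong_induction_on with
  | _ p ihp =>
    intro q
    induction q using Nat.strong_induction_on with
    | _ q ihq =>
      have H := h p q
      simp only [Finset.sum_range_succ, Nat.choose_self, one_mul] at H
      have r1 : ∀ i ∈ range p, ((∑ j ∈ range q, p.choose i * (q.choose j * f i j))
            + p.choose i * f i q)
          = ((∑ j ∈ range q, p.choose i * (q.choose j * g i j))
            + p.choose i * g i q) := by
        intro i hi
        have hfg : ∀ j, f i j = g i j := ihp i (mem_range.mp hi)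
        rw [Finset.sum_congr rfl fun j _ => by rw [hfg j], hfg q]
      have r2 : ∑ j ∈ range q, q.choose j * f p j = ∑ j ∈ range q, q.choose j * g p j :=
        Finset.sum_congr rfl fun j hj => by rw [ihq j (mem_range.mp hj)]
      rw [Finset.sum_congr rfl r1, r2] at H
      omega

lemma pow_eq_sum_choose' (k m x : ℕ) (h : k ≤ m) :
    x ^ k = ∑ i ∈ range (m + 1), x.choose i * (Nat.factorial i * stirling2 k i) := by
  rw [pow_eq_sum_choose]
  apply Finset.sum_subset (by rw [Finset.range_subset_range]; omega)
  intro i hi hik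
  rw [stirling2_zero_of_lt (by simp only [mem_range] at hi hik; omega)]
  simp

lemma pow_eq_sum_choose'' (k x : ℕ) :
    x ^ k = ∑ i ∈ range (x + 1), x.choose i * (Nat.factorial i * stirling2 k i) := by
  rw [pow_eq_sum_choose' k (max k x) x (le_max_left k x)]
  symm
  apply Finset.sum_subset (by rw [Finset.range_subset_range]; omega)
  intro i hi hix
  rw [Nat.choose_eq_zero_of_lt (by simp only [mem_range] at hix; omega)]
  simp

lemma entrywise (n p q : ℕ) :
    Nat.factorial n * cmCount p q n
      = ∑ k ∈ range (n + 1),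
          stirlingFst n k * (Nat.factorial p * stirling2 k p)
            * (Nat.factorial q * stirling2 k q) := by
  have master : ∀ p q,
      ∑ i ∈ range (p+1), ∑ j ∈ range (q+1),
        p.choose i * (q.choose j * (Nat.factorial n * cmCount i j n))
      = ∑ i ∈ range (p+1), ∑ j ∈ range (q+1),
        p.choose i * (q.choose j * (∑ k ∈ range (n + 1),
          stirlingFst n k * (Nat.factorial i * stirling2 k i)
            * (Nat.factorial j * stirling2 k j))) := by
    intro p q
    have l1 : ∑ i ∈ range (p+1), ∑ j ∈ range (q+1),
        p.choose i * (q.choose j * (Nat.factorial n * cmCount i j n))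
        = Nat.factorial n * Nat.multichoose (p * q) n := by
      rw [matSum_decomp p q n, Finset.mul_sum]
      refine Finset.sum_congr rfl fun i _ => ?_
      rw [Finset.mul_sum]
      exact Finset.sum_congr rfl fun j _ => by ring
    have l2 : Nat.factorial n * Nat.multichoose (p * q) n = (p * q).ascFactorial n := by
      rw [Nat.multichoose_eq, Nat.ascFactorial_eq_factorial_mul_choose']
    rw [l1, l2, ascFactorial_eq_sum]
    have l3 : ∀ k ∈ range (n + 1), stirlingFst n k * (p * q) ^ k
        = ∑ i ∈ range (p + 1), ∑ j ∈ range (q + 1),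
            p.choose i * (q.choose j * (stirlingFst n k
              * (Nat.factorial i * stirling2 k i) * (Nat.factorial j * stirling2 k j))) := by
      intro k hk
      rw [mul_pow, pow_eq_sum_choose'' k p, pow_eq_sum_choose'' k q,
        Finset.sum_mul_sum, Finset.mul_sum]
      refine Finset.sum_congr rfl fun i _ => ?_
      rw [Finset.mul_sum]
      exact Finset.sum_congr rfl fun j _ => by ring
    rw [Finset.sum_congr rfl l3]
    rw [Finset.sum_comm]
    refine Finset.sum_congr rfl fun i _ => ?_
    rw [Finset.sum_comm]
    refine Finset.sum_congr rfl fun j _ => ?_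
    rw [Finset.mul_sum, Finset.mul_sum]
  exact double_inversion _ _ master p q

lemma stirlingFst_zero (n : ℕ) (hn : 1 ≤ n) : stirlingFst n 0 = 0 := by
  rw [stirlingFst, Polynomial.coeff_zero_eq_eval_zero, Polynomial.eval_prod]
  apply Finset.prod_eq_zero (Finset.mem_range.mpr hn)
  simp

/-- entrywise form of the opposite Gauss decomposition of `𝔐(n)`:
`n! · m_{pq}(n) = Σ_{k=1}^n c(n,k) · p!S(k,p) · q!S(k,q)`. -/
theorem metamatrix_gauss_decomposition (n p q : ℕ) (hn : 1 ≤ n)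
    (hp : 1 ≤ p) (hpn : p ≤ n) (hq : 1 ≤ q) (hqn : q ≤ n) :
    Nat.factorial n * cmCount p q n
      = ∑ k ∈ Finset.Icc 1 n,
          stirlingFst n k * (Nat.factorial p * stirling2 k p)
            * (Nat.factorial q * stirling2 k q) := by
  rw [entrywise n p q, Finset.sum_range_succ', stirlingFst_zero n hn]
  simp only [zero_mul, add_zero]
  rw [show Finset.Icc 1 n = Finset.Ico 1 (n+1) by rw [Finset.Ico_add_one_right_eq_Icc],
    Finset.sum_Ico_eq_sum_range]
  simp only [Nat.add_sub_cancel]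
  exact Finset.sum_congr rfl fun i _ => by rw [Nat.add_comm 1 i]
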